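/- arXiv:2202.12054 — 2 statements merged into one kernel-verified Lean document; each statement's English description precedes it below -/
import Mathlib

section
/- Let G ≅ C₂^r ⊕ C₄^t with t ≥ 1 and let S be a sequence over G. Then S ∈ ℬ_±(G) if and only if σ_±(S) is a subgroup of 2G. -/
def IsWZS {G : Type*} [AddCommGroup G] (Γ : Set (G →+ G)) (S : Multiset G) : Prop :=
  ∃ T : Multiset (G × (G →+ G)),
    (∀ p ∈ T, p.2 ∈ Γ) ∧ T.map Prod.fst = S ∧ (T.map fun p => p.2 p.1).sum = 0

def sigmaSet {G : Type*} [AddCommGroup G] (Γ : Set (G →+ G)) (S : Multiset G) : Set G :=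
  {x | ∃ T : Multiset (G × (G →+ G)),
    (∀ p ∈ T, p.2 ∈ Γ) ∧ T.map Prod.fst = S ∧ (T.map fun p => p.2 p.1).sum = x}

def pmWeights (G : Type*) [AddCommGroup G] : Set (G →+ G) :=
  {AddMonoidHom.id G, -(AddMonoidHom.id G)}

def autWeights (G : Type*) [AddCommGroup G] : Set (G →+ G) :=
  {f : G →+ G | Function.Bijective ⇑f}

def IsAtomPM {G : Type*} [AddCommGroup G] (S : Multiset G) : Prop :=
  S ≠ 0 ∧ IsWZS (pmWeights G) S ∧
    ∀ A B : Multiset G, IsWZS (pmWeights G) A → IsWZS (pmWeights G) B →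
      A + B = S → A = 0 ∨ B = 0

def LSet {G : Type*} [AddCommGroup G] (B : Multiset G) : Set ℕ :=
  {ℓ | ∃ l : List (Multiset G), (∀ A ∈ l, IsAtomPM A) ∧ l.sum = B ∧ l.length = ℓ}

def BOver {G : Type*} [AddCommGroup G] (Γ : Set (G →+ G)) (G₀ : Set G) : Set (Multiset G) :=
  {S | (∀ g ∈ S, g ∈ G₀) ∧ IsWZS Γ S}

def IsBasisTuple {G : Type*} [AddCommGroup G] {r : ℕ} (e : Fin r → G) : Prop :=
  (∀ i, e i ≠ 0) ∧
  (∀ m : Fin r → ℤ, (∑ i, m i • e i) = 0 → ∀ i, m i • e i = 0) ∧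
  AddSubgroup.closure (Set.range e) = ⊤

/-!
If `B` collects the terms of `S` that receive the sign `-1`, the signed sum is
`S.sum - 2 • B.sum`. When `4 • G = 0`, the doubled subsums `2 • B.sum` (`B ≤ S`) form a subgroup
of `2G`: `2 • A.sum + 2 • B.sum` is the doubled sum of `(A ∪ B) - (A ∩ B)`. Hence `σ_±(S)` is a
coset of this subgroup, and it is a subgroup, namely this one, exactly when it contains `0`.
-/

section PlusMinusSums

variable {G : Type*} [AddCommGroup G]

theorem isWZS_iff_zero_mem_sigmaSet (Γ : Set (G →+ G)) (S : Multiset G) :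
    IsWZS Γ S ↔ 0 ∈ sigmaSet Γ S :=
  Iff.rfl

theorem mem_sigmaSet_pmWeights_iff (S : Multiset G) (x : G) :
    x ∈ sigmaSet (pmWeights G) S ↔ ∃ A B : Multiset G, A + B = S ∧ A.sum - B.sum = x := by
  classical
  constructor
  · rintro ⟨T, hΓ, rfl, rfl⟩
    let plus : G × (G →+ G) → Prop := fun p => p.2 = AddMonoidHom.id G
    have h_plus : ∀ p ∈ T.filter plus, p.2 p.1 = p.1 := by
      intro p hp
      rw [(Multiset.mem_filter.mp hp).2]
      rfl
    have h_minus : ∀ p ∈ T.filter (¬ plus ·), p.2 p.1 = -p.1 := by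
      intro p hp
      obtain ⟨hpT, hp⟩ := Multiset.mem_filter.mp hp
      rcases hΓ p hpT with h | h
      · exact absurd h hp
      · rw [h]; rfl
    refine ⟨(T.filter plus).map Prod.fst, (T.filter (¬ plus ·)).map Prod.fst, ?_, ?_⟩
    · rw [← Multiset.map_add, Multiset.filter_add_not]
    · conv_rhs => rw [← Multiset.filter_add_not plus T]
      rw [Multiset.map_add, Multiset.sum_add, Multiset.map_congr rfl h_plus,
        Multiset.map_congr rfl h_minus, Multiset.sum_map_neg, sub_eq_add_neg]
  · rintro ⟨A, B, rfl, rfl⟩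
    refine ⟨A.map (·, AddMonoidHom.id G) + B.map (·, -AddMonoidHom.id G), ?_, ?_, ?_⟩
    · simp only [Multiset.mem_add, Multiset.mem_map]
      rintro _ (⟨a, -, rfl⟩ | ⟨b, -, rfl⟩)
      exacts [Or.inl rfl, Or.inr rfl]
    · simp [Multiset.map_map]
    · simp [Multiset.map_map, Function.comp_def, Multiset.sum_map_neg', sub_eq_add_neg]

theorem mem_sigmaSet_pmWeights_iff_exists_le (S : Multiset G) (x : G) :
    x ∈ sigmaSet (pmWeights G) S ↔ ∃ B ≤ S, S.sum - 2 • B.sum = x := by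
  classical
  rw [mem_sigmaSet_pmWeights_iff]
  constructor
  · rintro ⟨A, B, rfl, rfl⟩
    refine ⟨B, le_add_self, ?_⟩
    rw [Multiset.sum_add, two_nsmul]
    abel
  · rintro ⟨B, hB, rfl⟩
    refine ⟨S - B, B, tsub_add_cancel_of_le hB, ?_⟩
    conv_rhs => rw [← tsub_add_cancel_of_le hB]
    rw [Multiset.sum_add, two_nsmul]
    abel

/-- Since `4 • c = 0`, the sum `c` of the common part of `A` and `B` drops out. -/
theorem two_nsmul_sum_union_tsub_inter [DecidableEq G] (h4 : ∀ g : G, 4 • g = 0)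
    (A B : Multiset G) :
    2 • ((A ∪ B) - (A ∩ B)).sum = 2 • A.sum + 2 • B.sum := by
  have h_inter_le : A ∩ B ≤ A ∪ B := Multiset.inter_le_left.trans Multiset.le_union_left
  have h_union : ((A ∪ B) - (A ∩ B)).sum + (A ∩ B).sum = (A ∪ B).sum := by
    rw [← Multiset.sum_add, tsub_add_cancel_of_le h_inter_le]
  have h_sum : (A ∪ B).sum + (A ∩ B).sum = A.sum + B.sum := by
    rw [← Multiset.sum_add, ← Multiset.sum_add, Multiset.union_add_inter]
  calc 2 • ((A ∪ B) - (A ∩ B)).sum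
      = 2 • ((A ∪ B) - (A ∩ B)).sum + 4 • (A ∩ B).sum := by rw [h4, add_zero]
    _ = 2 • (((A ∪ B) - (A ∩ B)).sum + (A ∩ B).sum + (A ∩ B).sum) := by
        rw [nsmul_add, nsmul_add, add_assoc, ← add_nsmul]
    _ = 2 • A.sum + 2 • B.sum := by rw [h_union, h_sum, nsmul_add]

def doubledSubsums (h4 : ∀ g : G, 4 • g = 0) (S : Multiset G) : AddSubgroup G where
  carrier := {x | ∃ B ≤ S, 2 • B.sum = x}
  zero_mem' := ⟨0, Multiset.zero_le S, by simp⟩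
  add_mem' := by
    classical
    rintro _ _ ⟨A, hA, rfl⟩ ⟨B, hB, rfl⟩
    exact ⟨(A ∪ B) - (A ∩ B), tsub_le_self.trans (Multiset.union_le hA hB),
      two_nsmul_sum_union_tsub_inter h4 A B⟩
  neg_mem' := by
    rintro _ ⟨B, hB, rfl⟩
    exact ⟨B, hB, (neg_eq_of_add_eq_zero_left (by rw [← add_nsmul]; exact h4 _)).symm⟩

theorem mem_doubledSubsums (h4 : ∀ g : G, 4 • g = 0) (S : Multiset G) (x : G) :
    x ∈ doubledSubsums h4 S ↔ ∃ B ≤ S, 2 • B.sum = x :=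
  Iff.rfl

theorem mem_sigmaSet_pmWeights_iff_sub_mem (h4 : ∀ g : G, 4 • g = 0) (S : Multiset G) (x : G) :
    x ∈ sigmaSet (pmWeights G) S ↔ S.sum - x ∈ doubledSubsums h4 S := by
  rw [mem_sigmaSet_pmWeights_iff_exists_le, mem_doubledSubsums]
  refine exists_congr fun B => and_congr_right fun _ => ?_
  rw [eq_sub_iff_add_eq, add_comm, ← eq_sub_iff_add_eq, eq_comm]

theorem sigmaSet_pmWeights_eq_doubledSubsums (h4 : ∀ g : G, 4 • g = 0) {S : Multiset G}
    (h0 : IsWZS (pmWeights G) S) :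
    sigmaSet (pmWeights G) S = doubledSubsums h4 S := by
  have h_sum : S.sum ∈ doubledSubsums h4 S := by
    simpa using (mem_sigmaSet_pmWeights_iff_sub_mem h4 S 0).1 h0
  ext x
  rw [mem_sigmaSet_pmWeights_iff_sub_mem h4, SetLike.mem_coe, sub_eq_add_neg,
    AddSubgroup.add_mem_cancel_left _ h_sum, neg_mem_iff]

end PlusMinusSums

theorem four_nsmul_eq_zero_of_addEquiv {G : Type*} [AddCommGroup G] {r t : ℕ}
    (iso : G ≃+ ((Fin r → ZMod 2) × (Fin t → ZMod 4))) (g : G) : 4 • g = 0 := by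
  have h2 : ∀ a : ZMod 2, 4 • a = 0 := by decide
  have h4 : ∀ a : ZMod 4, 4 • a = 0 := by decide
  apply iso.injective
  rw [map_nsmul, map_zero]
  exact Prod.ext (funext fun _ => h2 _) (funext fun _ => h4 _)

theorem stmt14_general {G : Type*} [AddCommGroup G] (r t : ℕ)
    (iso : G ≃+ ((Fin r → ZMod 2) × (Fin t → ZMod 4))) (S : Multiset G) :
    IsWZS (pmWeights G) S ↔
      ∃ H : AddSubgroup G, (H : Set G) = sigmaSet (pmWeights G) S ∧
        ∀ x ∈ H, ∃ g : G, x = g + g := by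
  have h4 := four_nsmul_eq_zero_of_addEquiv iso
  refine ⟨fun h0 => ⟨doubledSubsums h4 S, (sigmaSet_pmWeights_eq_doubledSubsums h4 h0).symm, ?_⟩, ?_⟩
  · rintro _ ⟨B, -, rfl⟩
    exact ⟨B.sum, two_nsmul _⟩
  · rintro ⟨H, hH, -⟩
    rw [isWZS_iff_zero_mem_sigmaSet, ← hH]
    exact H.zero_mem

theorem stmt14 {G : Type*} [AddCommGroup G] [Fintype G] (r t : ℕ) (ht : 1 ≤ t)
    (iso : G ≃+ ((Fin r → ZMod 2) × (Fin t → ZMod 4))) (S : Multiset G) :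
    IsWZS (pmWeights G) S ↔
      ∃ H : AddSubgroup G, (H : Set G) = sigmaSet (pmWeights G) S ∧
        ∀ x ∈ H, ∃ g : G, x = g + g :=
  stmt14_general r t iso S
end

section
/- Let G be a cyclic group of odd order n ≥ 3 and g a generator. For every k ∈ [1, n−1], the sequence gⁿ · g^{n−k} · (kg) in ℬ_±(G) has set of lengths exactly {2, n−k+1}. Consequently, [1, n−2] ⊆ Δ(ℬ_±(G)). -/
/-!
A subsequence of `gᵐ (kg)` is determined by its number of copies of `g` and whether it contains
`kg`, and it lies in `ℬ_±(G)` iff one of its signed sums `c • g`, where `|c|` is bounded by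
the sum of the coefficients, has `n ∣ c`. This makes atomhood pure arithmetic: the atoms dividing
`g²ⁿ⁻ᵏ (kg)` are `g²`, `gⁿ`, `gᵏ (kg)` and `gⁿ⁻ᵏ (kg)`. A factorization has exactly one atom
containing `kg`, and counting the copies of `g` leaves only `gⁿ · gⁿ⁻ᵏ (kg)` and
`(g²)ⁿ⁻ᵏ · gᵏ (kg)`, of lengths `2` and `n - k + 1`.
-/

open Multiset

theorem isWZS_pmWeights_iff {G : Type*} [AddCommGroup G] (S : Multiset G) :
    IsWZS (pmWeights G) S ↔ ∃ A B : Multiset G, A + B = S ∧ A.sum = B.sum := by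
  classical
  constructor
  · rintro ⟨T, hT, rfl, hsum⟩
    let plus : G × (G →+ G) → Prop := fun p => p.2 = AddMonoidHom.id G
    have hplus : ∀ p ∈ T.filter plus, p.2 p.1 = p.1 := fun p hp => by
      rw [(mem_filter.1 hp).2]; rfl
    have hminus : ∀ p ∈ T.filter (¬ plus ·), p.2 p.1 = -p.1 := fun p hp => by
      obtain ⟨hpT, hp⟩ := mem_filter.1 hp
      rcases hT p hpT with h | h
      · exact absurd h hp
      · rw [Set.mem_singleton_iff.1 h]; rfl
    refine ⟨(T.filter plus).map Prod.fst, (T.filter (¬ plus ·)).map Prod.fst,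
      by rw [← map_add, filter_add_not], ?_⟩
    rw [← filter_add_not plus T, map_add, sum_add, map_congr rfl hplus, map_congr rfl hminus,
      sum_map_neg] at hsum
    exact add_neg_eq_zero.1 hsum
  · rintro ⟨A, B, rfl, hAB⟩
    refine ⟨A.map (·, AddMonoidHom.id G) + B.map (·, -AddMonoidHom.id G), ?_, ?_, ?_⟩
    · simp [pmWeights, or_imp, forall_and]
    · simp [map_map]
    · simp [map_map, Function.comp_def, sum_map_neg', hAB]

@[simp]
theorem Multiset.replicate_eq_zero_iff {α : Type*} {a : α} {m : ℕ} : replicate m a = 0 ↔ m = 0 := by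
  rw [← card_eq_zero, card_replicate]

theorem exists_eq_replicate_of_add_eq_replicate {α : Type*} {A B : Multiset α} {m : ℕ} {g : α}
    (h : A + B = replicate m g) : ∃ a b, a + b = m ∧ A = replicate a g ∧ B = replicate b g := by
  obtain ⟨a, -, rfl⟩ := le_replicate_iff.1 (h ▸ le_self_add)
  obtain ⟨b, -, rfl⟩ := le_replicate_iff.1 (h ▸ le_add_self)
  exact ⟨a, b, by simpa using congr_arg card h, rfl, rfl⟩

theorem exists_eq_replicate_add_singleton_of_add_eq {α : Type*} {A B : Multiset α} {m : ℕ}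
    {g x : α} (h : A + B = replicate m g + {x}) (hx : x ∈ A) :
    ∃ a b, a + b = m ∧ A = replicate a g + {x} ∧ B = replicate b g := by
  obtain ⟨A, rfl⟩ := exists_cons_of_mem hx
  rw [cons_add, add_comm (replicate m g), singleton_add, cons_inj_right] at h
  obtain ⟨a, b, hab, rfl, rfl⟩ := exists_eq_replicate_of_add_eq_replicate h
  exact ⟨a, b, hab, by rw [add_comm, singleton_add], rfl⟩

theorem exists_eq_replicate_of_add_eq_replicate_add_singleton {α : Type*} {A B : Multiset α}
    {m : ℕ} {g x : α} (h : A + B = replicate m g + {x}) :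
    ∃ a b, a + b = m ∧ (A = replicate a g + {x} ∧ B = replicate b g ∨
      A = replicate a g ∧ B = replicate b g + {x}) := by
  have hx : x ∈ A + B := h ▸ mem_add.2 (Or.inr (mem_singleton_self x))
  rcases mem_add.1 hx with hxA | hxB
  · obtain ⟨a, b, hab, hA, hB⟩ := exists_eq_replicate_add_singleton_of_add_eq h hxA
    exact ⟨a, b, hab, .inl ⟨hA, hB⟩⟩
  · obtain ⟨b, a, hba, hB, hA⟩ :=
      exists_eq_replicate_add_singleton_of_add_eq ((add_comm B A).trans h) hxB
    exact ⟨a, b, by omega, .inr ⟨hA, hB⟩⟩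

theorem exists_add_eq_and_dvd_iff {n j k : ℕ} (hn : 0 < n) (hk : k ≤ n) (hjk : j + k ≤ 2 * n) :
    (∃ a b : ℕ, a + b = j ∧ (n : ℤ) ∣ b - (a + k)) ↔
      (k ≤ j ∧ Even (j + k)) ∨ (n ≤ j + k ∧ Even (j + k + n)) := by
  simp only [Nat.even_iff]
  constructor
  · rintro ⟨a, b, rfl, t, ht⟩
    obtain ⟨ht₁, ht₂⟩ : -2 ≤ t ∧ t ≤ 2 := by constructor <;> nlinarith
    interval_cases t <;> omega
  · rintro (⟨hkj, hj⟩ | ⟨hnj, hj⟩)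
    · exact ⟨(j - k) / 2, (j + k) / 2, by omega, 0, by omega⟩
    · exact ⟨(j + n - k) / 2, (j + k - n) / 2, by omega, -1, by omega⟩

section Replicate

variable {G : Type*} [AddCommGroup G] {g : G} {n j k : ℕ}

theorem isWZS_replicate_iff_exists :
    IsWZS (pmWeights G) (replicate j g) ↔ ∃ a b, a + b = j ∧ a • g = b • g := by
  rw [isWZS_pmWeights_iff]
  constructor
  · rintro ⟨A, B, hAB, hsum⟩
    obtain ⟨a, b, hab, rfl, rfl⟩ := exists_eq_replicate_of_add_eq_replicate hAB
    exact ⟨a, b, hab, by simpa using hsum⟩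
  · rintro ⟨a, b, rfl, h⟩
    exact ⟨replicate a g, replicate b g, (replicate_add a b g).symm, by simpa using h⟩

theorem isWZS_replicate_add_singleton_iff_exists {x : G} :
    IsWZS (pmWeights G) (replicate j g + {x}) ↔ ∃ a b, a + b = j ∧ a • g + x = b • g := by
  rw [isWZS_pmWeights_iff]
  constructor
  · rintro ⟨A, B, hAB, hsum⟩
    obtain ⟨a, b, hab, ⟨rfl, rfl⟩ | ⟨rfl, rfl⟩⟩ :=
      exists_eq_replicate_of_add_eq_replicate_add_singleton hAB
    · exact ⟨a, b, hab, by simpa using hsum⟩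
    · exact ⟨b, a, by omega, by simpa using hsum.symm⟩
  · rintro ⟨a, b, rfl, h⟩
    refine ⟨replicate a g + {x}, replicate b g, ?_, by simpa using h⟩
    rw [replicate_add, add_right_comm]

theorem isAtomPM_replicate_iff_forall :
    IsAtomPM (replicate j g) ↔ j ≠ 0 ∧ IsWZS (pmWeights G) (replicate j g) ∧
      ∀ a b, a + b = j → IsWZS (pmWeights G) (replicate a g) →
        IsWZS (pmWeights G) (replicate b g) → a = 0 ∨ b = 0 := by
  refine and_congr (not_congr replicate_eq_zero_iff) (and_congr_right fun _ =>
    ⟨fun h a b hab hA hB => ?_, fun h A B hA hB hAB => ?_⟩)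
  · simpa using h _ _ hA hB (by rw [← hab, replicate_add])
  · obtain ⟨a, b, hab, rfl, rfl⟩ := exists_eq_replicate_of_add_eq_replicate hAB
    simpa using h a b hab hA hB

theorem isAtomPM_replicate_add_singleton_iff_forall {x : G} :
    IsAtomPM (replicate j g + {x}) ↔ IsWZS (pmWeights G) (replicate j g + {x}) ∧
      ∀ a b, a + b = j → IsWZS (pmWeights G) (replicate a g + {x}) →
        IsWZS (pmWeights G) (replicate b g) → b = 0 := by
  refine (and_iff_right (by simp)).trans (and_congr_right fun _ =>
    ⟨fun h a b hab hA hB => ?_, fun h A B hA hB hAB => ?_⟩)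
  · simpa using h _ _ hA hB (by rw [← hab, replicate_add, add_right_comm])
  · obtain ⟨a, b, hab, ⟨rfl, rfl⟩ | ⟨rfl, rfl⟩⟩ :=
      exists_eq_replicate_of_add_eq_replicate_add_singleton hAB
    · simpa using h a b hab hA hB
    · simpa using h b a (by omega) hB hA

theorem nsmul_add_nsmul_eq_nsmul_iff (hg : addOrderOf g = n) {a b : ℕ} :
    a • g + k • g = b • g ↔ (n : ℤ) ∣ b - (a + k) := by
  rw [← add_nsmul, nsmul_eq_nsmul_iff_modEq, hg, Nat.modEq_iff_dvd, Nat.cast_add]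

theorem isWZS_replicate_iff (hg : addOrderOf g = n) (hn : 0 < n) (hj : j ≤ 2 * n) :
    IsWZS (pmWeights G) (replicate j g) ↔ Even j ∨ (n ≤ j ∧ Even (j + n)) := by
  simp only [isWZS_replicate_iff_exists, nsmul_eq_nsmul_iff_modEq, hg, Nat.modEq_iff_dvd]
  simpa using exists_add_eq_and_dvd_iff (j := j) hn n.zero_le (by omega)

theorem isWZS_replicate_add_nsmul_iff (hg : addOrderOf g = n) (hn : 0 < n) (hk : k ≤ n)
    (hjk : j + k ≤ 2 * n) :
    IsWZS (pmWeights G) (replicate j g + {k • g}) ↔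
      (k ≤ j ∧ Even (j + k)) ∨ (n ≤ j + k ∧ Even (j + k + n)) := by
  simp only [isWZS_replicate_add_singleton_iff_exists, nsmul_add_nsmul_eq_nsmul_iff hg]
  exact exists_add_eq_and_dvd_iff hn hk hjk

theorem isAtomPM_replicate_iff (hg : addOrderOf g = n) (hn : Odd n) (h3 : 3 ≤ n)
    (hj : j ≤ 2 * n) : IsAtomPM (replicate j g) ↔ j = 2 ∨ j = n := by
  have hP : ∀ i ≤ j,
      IsWZS (pmWeights G) (replicate i g) ↔ i % 2 = 0 ∨ (n ≤ i ∧ (i + n) % 2 = 0) :=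
    fun i hi => by simp only [isWZS_replicate_iff hg (by omega) (hi.trans hj), Nat.even_iff]
  obtain ⟨m, rfl⟩ := hn
  rw [isAtomPM_replicate_iff_forall, hP j le_rfl]
  constructor
  · rintro ⟨hj0, hjP, hmin⟩
    by_contra hne
    -- any other even `j` splits off `g²`, any other odd `j` splits off `gⁿ`
    rcases Nat.even_or_odd' j with ⟨i, rfl | rfl⟩
    · have := hmin 2 (2 * i - 2) (by omega) ((hP 2 (by omega)).2 (by omega))
        ((hP _ (by omega)).2 (by omega))
      omega
    · have := hmin (2 * m + 1) (2 * i + 1 - (2 * m + 1)) (by omega)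
        ((hP _ (by omega)).2 (by omega)) ((hP _ (by omega)).2 (by omega))
      omega
  · intro hj2
    refine ⟨by omega, by omega, fun a b hab ha hb => ?_⟩
    rw [hP a (by omega)] at ha
    rw [hP b (by omega)] at hb
    omega

theorem isAtomPM_replicate_add_nsmul_iff (hg : addOrderOf g = n) (hn : Odd n) (hk : 1 ≤ k)
    (hkn : k < n) (hjk : j + k ≤ 2 * n) :
    IsAtomPM (replicate j g + {k • g}) ↔ j = k ∨ j = n - k := by
  have hP : ∀ i ≤ j,
      IsWZS (pmWeights G) (replicate i g) ↔ i % 2 = 0 ∨ (n ≤ i ∧ (i + n) % 2 = 0) :=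
    fun i hi => by simp only [isWZS_replicate_iff (j := i) hg (by omega) (by omega), Nat.even_iff]
  have hQ : ∀ i ≤ j, IsWZS (pmWeights G) (replicate i g + {k • g}) ↔
      (k ≤ i ∧ (i + k) % 2 = 0) ∨ (n ≤ i + k ∧ (i + k + n) % 2 = 0) :=
    fun i hi => by
      simp only [isWZS_replicate_add_nsmul_iff (j := i) hg (by omega) hkn.le (by omega),
        Nat.even_iff]
  obtain ⟨m, rfl⟩ := hn
  rw [isAtomPM_replicate_add_singleton_iff_forall, hQ j le_rfl]
  constructor
  · rintro ⟨hjQ, hmin⟩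
    by_contra hne
    -- any other `j` splits off `g²`
    have := hmin (j - 2) 2 (by omega) ((hQ _ (by omega)).2 (by omega))
      ((hP 2 (by omega)).2 (by omega))
    omega
  · intro hj
    refine ⟨by omega, fun a b hab ha hb => ?_⟩
    rw [hQ a (by omega)] at ha
    rw [hP b (by omega)] at hb
    omega

end Replicate

theorem List.exists_add_eq_length_and_sum_eq {u v : ℕ} {L : List ℕ}
    (h : ∀ c ∈ L, c = u ∨ c = v) :
    ∃ p q, p + q = L.length ∧ L.sum = p * u + q * v := by
  induction L with
  | nil => exact ⟨0, 0, rfl, by simp⟩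
  | cons c L ih =>
    obtain ⟨p, q, hpq, hs⟩ := ih fun c hc => h c (mem_cons_of_mem _ hc)
    rcases h c mem_cons_self with rfl | rfl
    · exact ⟨p + 1, q, by simp [← hpq]; omega, by rw [sum_cons, hs]; ring⟩
    · exact ⟨p, q + 1, by simp [← hpq]; omega, by rw [sum_cons, hs]; ring⟩

section Factorizations

variable {G : Type*} [AddCommGroup G] {g : G} {n k : ℕ}

theorem length_eq_of_sum_eq_replicate_add_nsmul (hg : addOrderOf g = n) (hn : Odd n)
    (h3 : 3 ≤ n) (hk : 1 ≤ k) (hkn : k < n) {l : List (Multiset G)} (hl : ∀ A ∈ l, IsAtomPM A)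
    (hsum : l.sum = replicate (2 * n - k) g + {k • g}) :
    l.length = 2 ∨ l.length = n - k + 1 := by
  classical
  obtain ⟨A, hAl, hxA⟩ : ∃ A ∈ l, k • g ∈ A := by
    have : k • g ∈ join (l : Multiset (Multiset G)) := by simp [join, hsum]
    simpa using mem_join.1 this
  set R := l.erase A
  have hsplit : A + R.sum = replicate (2 * n - k) g + {k • g} := by
    rw [← List.sum_cons, ← (List.perm_cons_erase hAl).sum_eq, hsum]
  obtain ⟨a, b, hab, hA, hR⟩ := exists_eq_replicate_add_singleton_of_add_eq hsplit hxA
  have ha : a = k ∨ a = n - k :=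
    (isAtomPM_replicate_add_nsmul_iff hg hn hk hkn (by omega)).1 (hA ▸ hl A hAl)
  have hcards : ∀ c ∈ R.map card, c = 2 ∨ c = n := by
    simp only [List.mem_map]
    rintro _ ⟨C, hC, rfl⟩
    obtain ⟨c, hc, rfl⟩ := le_replicate_iff.1 (hR ▸ List.le_sum_of_mem hC)
    rw [card_replicate]
    exact (isAtomPM_replicate_iff hg hn h3 (by omega)).1 (hl _ (List.mem_of_mem_erase hC))
  obtain ⟨p, q, hpq, hs⟩ := List.exists_add_eq_length_and_sum_eq hcards
  have hb : p * 2 + q * n = b := by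
    have hcard : card R.sum = (R.map card).sum := map_list_sum cardHom R
    rw [← hs, ← hcard, hR, card_replicate]
  have hlen : l.length = p + q + 1 := by
    rw [(List.perm_cons_erase hAl).length_eq, List.length_cons, hpq, List.length_map]
  have hq : q ≤ 2 := by
    by_contra! hq
    have := Nat.mul_le_mul_right n hq
    omega
  obtain ⟨m, rfl⟩ := hn
  interval_cases q <;> omega

theorem lSet_replicate_add_nsmul (hg : addOrderOf g = n) (hn : Odd n) (h3 : 3 ≤ n)
    (hk : 1 ≤ k) (hkn : k < n) :
    LSet (replicate (2 * n - k) g + {k • g}) = {2, n - k + 1} := by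
  ext ℓ
  constructor
  · rintro ⟨l, hl, hsum, rfl⟩
    exact length_eq_of_sum_eq_replicate_add_nsmul hg hn h3 hk hkn hl hsum
  · rintro (rfl | rfl)
    · refine ⟨[replicate n g, replicate (n - k) g + {k • g}], ?_, ?_, rfl⟩
      · simp only [List.mem_cons, List.not_mem_nil, or_false, forall_eq_or_imp, forall_eq]
        exact ⟨(isAtomPM_replicate_iff hg hn h3 (by omega)).2 (.inr rfl),
          (isAtomPM_replicate_add_nsmul_iff hg hn hk hkn (by omega)).2 (.inr rfl)⟩
      · rw [List.sum_cons, List.sum_cons, List.sum_nil, add_zero, ← add_assoc, ← replicate_add]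
        congr 2; omega
    · refine ⟨List.replicate (n - k) (replicate 2 g) ++ [replicate k g + {k • g}], ?_, ?_,
        by simp⟩
      · simp only [List.mem_append, List.mem_replicate, List.mem_singleton]
        rintro A (⟨-, rfl⟩ | rfl)
        · exact (isAtomPM_replicate_iff hg hn h3 (by omega)).2 (.inl rfl)
        · exact (isAtomPM_replicate_add_nsmul_iff hg hn hk hkn (by omega)).2 (.inl rfl)
      · rw [List.sum_append, List.sum_replicate, List.sum_singleton, ← add_assoc, nsmul_replicate,
          ← replicate_add]
        congr 2; omega

end Factorizations

theorem stmt16 {G : Type*} [AddCommGroup G] [Fintype G]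
    (hodd : Odd (Fintype.card G)) (h3 : 3 ≤ Fintype.card G)
    (g : G) (hg : addOrderOf g = Fintype.card G) :
    (∀ k : ℕ, 1 ≤ k → k ≤ Fintype.card G - 1 →
      LSet (Multiset.replicate (2 * Fintype.card G - k) g + ({k • g} : Multiset G))
        = ({2, Fintype.card G - k + 1} : Set ℕ))
    ∧ ∀ d : ℕ, 1 ≤ d → d ≤ Fintype.card G - 2 →
        ∃ (B : Multiset G) (ℓ : ℕ), ℓ ∈ LSet B ∧ ℓ + d ∈ LSet B ∧
          ∀ j : ℕ, ℓ < j → j < ℓ + d → j ∉ LSet B := by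
  generalize Fintype.card G = n at *
  have hL : ∀ k, 1 ≤ k → k ≤ n - 1 →
      LSet (replicate (2 * n - k) g + {k • g}) = {2, n - k + 1} :=
    fun k hk hkn => lSet_replicate_add_nsmul hg hodd h3 hk (by omega)
  refine ⟨hL, fun d hd hdn => ?_⟩
  -- for `k = n - 1 - d` the two lengths are `2` and `2 + d`
  refine ⟨replicate (2 * n - (n - 1 - d)) g + {(n - 1 - d) • g}, 2, ?_⟩
  rw [hL (n - 1 - d) (by omega) (by omega)]
  simp only [Set.mem_insert_iff, Set.mem_singleton_iff, true_or, true_and]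
  exact ⟨by omega, fun j hj₁ hj₂ => by omega⟩
end
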